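/- Chen's identity with respect to diagonal deconcatenation: for all A, B ∈ evZ, all bounds ℓ, r ∈ ℕ₀² with ℓ ≤ size(A) ≤ r (product order), and every matrix composition a over M_d, ⟨SS_{ℓ;r}(A ⊘ B), a⟩ = Σ_{(b,c): diag(b,c)=a} ⟨SS_{ℓ;size(A)}(A ⊘ B), b⟩ · ⟨SS_{size(A);r}(A ⊘ B), c⟩, the sum ranging over all pairs of matrix compositions (b,c) with diag(b,c) = a. Equivalently, ⟨SS(A ⊘ B), a⟩ = Σ_{(b,c): diag(b,c)=a} ⟨SS(A), b⟩ · ⟨SS(B), c⟩ for every matrix composition a. -/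

import Mathlib

open scoped Classical

namespace TwoParam

/-! ### The free commutative monoid on `d` generators, written additively -/

abbrev Md (d : ℕ) := Fin d →₀ ℕ

/-! ### Raw matrices over `Md d` and matrix compositions

A raw matrix is a function `ℕ → ℕ → Md d` together with a number of rows and
columns, normalized to be `0` (= the neutral element `ε`) outside the range.
The empty composition is the `0 × 0` matrix. -/

structure RawMat (d : ℕ) where
  rows : ℕ
  cols : ℕ
  entry : ℕ → ℕ → Md d
  entry_eq_zero : ∀ i j : ℕ, rows ≤ i ∨ cols ≤ j → entry i j = 0

namespace RawMat

variable {d : ℕ}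

/-- A matrix composition: no row and no column consists entirely of `ε`.
(The empty `0 × 0` matrix vacuously satisfies this.) -/
def IsComp (a : RawMat d) : Prop :=
  (∀ i < a.rows, ∃ j < a.cols, a.entry i j ≠ 0) ∧
  (∀ j < a.cols, ∃ i < a.rows, a.entry i j ≠ 0)

/-- The empty composition. -/
def empty (d : ℕ) : RawMat d := ⟨0, 0, fun _ _ => 0, fun _ _ _ => rfl⟩

/-- Diagonal block concatenation of two matrices. -/
def diag (a b : RawMat d) : RawMat d where
  rows := a.rows + b.rows
  cols := a.cols + b.cols
  entry := fun i j =>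
    if i < a.rows ∧ j < a.cols then a.entry i j
    else if a.rows ≤ i ∧ a.cols ≤ j then b.entry (i - a.rows) (j - a.cols)
    else 0
  entry_eq_zero := by
    intro i j h
    try dsimp only
    split_ifs with h1 h2
    · exact absurd h (by omega)
    · exact b.entry_eq_zero _ _ (by omega)
    · rfl

/-- A non-empty composition is connected if it admits no nontrivial
block-diagonal decomposition into compositions. -/
def Connected (a : RawMat d) : Prop :=
  a.IsComp ∧ a ≠ empty d ∧
    ∀ b c : RawMat d, b.IsComp → c.IsComp → a = b.diag c →
      b = empty d ∨ c = empty d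

/-- Total weight of a matrix: the homomorphism `Md d → ℕ` sending every
generator to `1`, summed over all entries. -/
def weight (a : RawMat d) : ℕ :=
  ∑ i ∈ Finset.range a.rows, ∑ j ∈ Finset.range a.cols,
    (a.entry i j).sum fun _ e => e

end RawMat

/-! ### Evaluation of monomials -/

/-- For `z ∈ R^d` and `m ∈ Md d`, the evaluation `z^(m) = ∏ j, z j ^ m j`. -/
def evalMon {d : ℕ} {R : Type*} [CommRing R] (z : Fin d → R) (m : Md d) : R :=
  m.prod fun j e => z j ^ e

/-! ### Two-parameter sums signature -/

/-- Strictly increasing chains of length `m` with values in `[lo, hi)`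
(0-based indexing of the data). -/
noncomputable def chainsB (m lo hi : ℕ) : Finset (Fin m → ℕ) :=
  (Fintype.piFinset fun _ : Fin m => Finset.Ico lo hi).filter StrictMono

/-- The bounded two-parameter sums signature coefficient `⟨SS_{l;r}(Z), a⟩`. -/
noncomputable def SSb {d : ℕ} {R : Type*} [CommRing R]
    (Z : ℕ × ℕ → Fin d → R) (l r : ℕ × ℕ) (a : RawMat d) : R :=
  ∑ ι ∈ chainsB a.rows l.1 r.1, ∑ κ ∈ chainsB a.cols l.2 r.2,
    ∏ s : Fin a.rows, ∏ t : Fin a.cols, evalMon (Z (ι s, κ t)) (a.entry s t)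

/-- The (unbounded) two-parameter sums signature coefficient `⟨SS(Z), a⟩`,
for finitely supported `Z` a finite sum. -/
noncomputable def SSc {d : ℕ} {R : Type*} [CommRing R]
    (Z : ℕ × ℕ → Fin d → R) (a : RawMat d) : R :=
  ∑ᶠ ι ∈ {f : Fin a.rows → ℕ | StrictMono f},
    ∑ᶠ κ ∈ {g : Fin a.cols → ℕ | StrictMono g},
      ∏ s : Fin a.rows, ∏ t : Fin a.cols, evalMon (Z (ι s, κ t)) (a.entry s t)

/-! ### Quasi-shuffle surjections -/

/-- `qShSet m s j`: surjections `{1,…,m+s} ↠ {1,…,j}` that are strictly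
increasing on the first `m` and on the last `s` arguments. -/
noncomputable def qShSet (m s j : ℕ) : Finset (Fin (m + s) → Fin j) :=
  Finset.univ.filter fun q =>
    Function.Surjective q ∧
    (∀ u v : Fin (m + s), u < v → (v : ℕ) < m → q u < q v) ∧
    (∀ u v : Fin (m + s), u < v → m ≤ (u : ℕ) → q u < q v)

/-- The summand `c^{p,q}` of the two-parameter quasi-shuffle: the `j × k`
matrix with entries `⋆_{u ∈ p⁻¹(x), v ∈ q⁻¹(y)} diag(a,b)_{u,v}`. -/
noncomputable def qshMat {d : ℕ} (a b : RawMat d) {j k : ℕ}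
    (p : Fin (a.rows + b.rows) → Fin j) (q : Fin (a.cols + b.cols) → Fin k) :
    RawMat d where
  rows := j
  cols := k
  entry := fun x y =>
    if hx : x < j then
      if hy : y < k then
        ∑ u ∈ Finset.univ.filter (fun u => p u = ⟨x, hx⟩),
          ∑ v ∈ Finset.univ.filter (fun v => q v = ⟨y, hy⟩),
            (a.diag b).entry u v
      else 0
    else 0
  entry_eq_zero := by
    intro x y h
    try dsimp only
    split_ifs with hx hy
    · exact absurd h (by omega)
    · rfl
    · rfl

/-- The two-parameter quasi-shuffle `a ⧢ b`, as an element of the free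
`R`-module on matrices.  (The empty index sets for `j` or `k` outside
`[0, rows+rows]` resp. `[0, cols+cols]` implement the conventions
`e ⧢ a = a ⧢ e = a` and `e ⧢ e = e`.) -/
noncomputable def qsh {d : ℕ} (R : Type*) [CommRing R] (a b : RawMat d) :
    RawMat d →₀ R :=
  ∑ j ∈ Finset.range (a.rows + b.rows + 1),
    ∑ k ∈ Finset.range (a.cols + b.cols + 1),
      ∑ p ∈ qShSet a.rows b.rows j,
        ∑ q ∈ qShSet a.cols b.cols k,
          Finsupp.single (qshMat a b p q) 1

/-- Bilinear extension of the quasi-shuffle to the free module. -/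
noncomputable def qshL {d : ℕ} {R : Type*} [CommRing R]
    (F G : RawMat d →₀ R) : RawMat d →₀ R :=
  F.sum fun a ra => G.sum fun b rb => (ra * rb) • qsh R a b

/-! ### Two-parameter data: eventually zero / eventually constant functions -/

variable {V : Type*}

/-- Eventually zero two-parameter data: finite support. -/
def EvZ [Zero V] (X : ℕ × ℕ → V) : Prop := (Function.support X).Finite

/-- Eventually constant two-parameter data: there is a box outside of which
`X` is constant; i.e. whenever two values differ, one of the two indices lies
in the box. -/
def EvC (X : ℕ × ℕ → V) : Prop :=
  ∃ n : ℕ × ℕ, ∀ i j : ℕ × ℕ, X i ≠ X j →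
    (i.1 ≤ n.1 ∧ i.2 ≤ n.2) ∨ (j.1 ≤ n.1 ∧ j.2 ≤ n.2)

/-- The coordinate of `i` along the axis `a` (axis `0` = rows, `1` = cols). -/
def axC (a : Fin 2) (i : ℕ × ℕ) : ℕ := if a = 0 then i.1 else i.2

/-- Shift an index one step down along the axis `a`. -/
def shiftD (a : Fin 2) (i : ℕ × ℕ) : ℕ × ℕ :=
  if a = 0 then (i.1 - 1, i.2) else (i.1, i.2 - 1)

/-- The zero insertion operator (0-based position `k`): insert a zero
row/column at position `k` along axis `a`. -/
def zeroIns [Zero V] (a : Fin 2) (k : ℕ) (X : ℕ × ℕ → V) : ℕ × ℕ → V :=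
  fun i => if axC a i < k then X i else if axC a i = k then 0 else X (shiftD a i)

/-- The warping operator (0-based position `k`): duplicate the row/column at
position `k` along axis `a`. -/
def warp (a : Fin 2) (k : ℕ) (X : ℕ × ℕ → V) : ℕ × ℕ → V :=
  fun i => if axC a i ≤ k then X i else X (shiftD a i)

/-- The two-parameter (forward) difference operator `δ`. -/
def diffOp [AddCommGroup V] (X : ℕ × ℕ → V) : ℕ × ℕ → V := fun i =>
  X (i.1 + 1, i.2 + 1) - X (i.1 + 1, i.2) - X (i.1, i.2 + 1) + X (i.1, i.2)

/-- The summation operator `ς`, a right inverse of `δ`: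
`(ς Z)_{i,j} = Σ_{s ≥ i} Σ_{t ≥ j} Z_{s,t}`. -/
noncomputable def sigmaOp [AddCommMonoid V] (Z : ℕ × ℕ → V) : ℕ × ℕ → V :=
  fun i => ∑ᶠ p ∈ {p : ℕ × ℕ | i.1 ≤ p.1 ∧ i.2 ≤ p.2}, Z p

/-- The set of all `n ∈ ℕ²` such that `X` is determined inside the
`n.1 × n.2` upper-left box (0-based size/count convention). -/
def sizeSetC (X : ℕ × ℕ → V) : Set (ℕ × ℕ) :=
  {n | ∀ i j : ℕ × ℕ, X i ≠ X j →
    (i.1 < n.1 ∧ i.2 < n.2) ∨ (j.1 < n.1 ∧ j.2 < n.2)}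

/-- `rows(X)` for eventually constant `X`: first component of the least
element of `sizeSetC X`. -/
noncomputable def rowsC (X : ℕ × ℕ → V) : ℕ := sInf (Prod.fst '' sizeSetC X)

/-- `cols(X)` for eventually constant `X`. -/
noncomputable def colsC (X : ℕ × ℕ → V) : ℕ := sInf (Prod.snd '' sizeSetC X)

/-- `rows(Z)` for eventually zero `Z`, defined via the support. -/
noncomputable def rowsZ [Zero V] (Z : ℕ × ℕ → V) : ℕ :=
  sInf {m : ℕ | ∀ i : ℕ × ℕ, Z i ≠ 0 → i.1 < m}

/-- `cols(Z)` for eventually zero `Z`, defined via the support. -/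
noncomputable def colsZ [Zero V] (Z : ℕ × ℕ → V) : ℕ :=
  sInf {m : ℕ | ∀ i : ℕ × ℕ, Z i ≠ 0 → i.2 < m}

/-- Diagonal concatenation `A ⊘ B` on eventually zero functions,
with `rows`/`cols` taken in the eventually-constant sense. -/
noncomputable def dconc [AddCommGroup V] (A B : ℕ × ℕ → V) : ℕ × ℕ → V :=
  A + (zeroIns 0 0)^[rowsC A] ((zeroIns 1 0)^[colsC A] B)

/-- Diagonal concatenation `A ⊘ B` on eventually zero functions,
with `rows`/`cols` taken in the support sense. -/
noncomputable def dconcZ [AddCommGroup V] (A B : ℕ × ℕ → V) : ℕ × ℕ → V :=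
  A + (zeroIns 0 0)^[rowsZ A] ((zeroIns 1 0)^[colsZ A] B)

/-- Concatenation along the diagonal `X ⊠ Y` on eventually constant
functions: `ς(δX) + Warp_{1,1}^{rows X}(Warp_{2,1}^{cols X}(Y))`. -/
noncomputable def bconc [AddCommGroup V] (X Y : ℕ × ℕ → V) : ℕ × ℕ → V :=
  sigmaOp (diffOp X) + (warp 0 0)^[rowsC X] ((warp 1 0)^[colsC X] Y)


/-! ### Two-parameter quasisymmetric functions -/

/-- Monomials in the commuting variables `x_{i,j}`, `(i,j) ∈ ℕ × ℕ`. -/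
abbrev Mon := (ℕ × ℕ) →₀ ℕ

/-- Total degree of a monomial. -/
def mdeg (m : Mon) : ℕ := m.sum fun _ e => e

/-- A formal power series (given by its coefficient function) has finite
total degree. -/
def FinDeg {R : Type*} [Zero R] (f : Mon → R) : Prop :=
  ∃ D : ℕ, ∀ m : Mon, f m ≠ 0 → mdeg m ≤ D

/-- `ℕ₀`-valued raw matrices, normalized to vanish outside the range. -/
structure NMat where
  rows : ℕ
  cols : ℕ
  entry : ℕ → ℕ → ℕ
  entry_eq_zero : ∀ i j : ℕ, rows ≤ i ∨ cols ≤ j → entry i j = 0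

namespace NMat

/-- An `ℕ₀`-matrix composition: no zero row and no zero column. -/
def IsComp (a : NMat) : Prop :=
  (∀ i < a.rows, ∃ j < a.cols, a.entry i j ≠ 0) ∧
  (∀ j < a.cols, ∃ i < a.rows, a.entry i j ≠ 0)

/-- The empty composition. -/
def empty : NMat := ⟨0, 0, fun _ _ => 0, fun _ _ _ => rfl⟩

/-- Diagonal block concatenation. -/
def diag (a b : NMat) : NMat where
  rows := a.rows + b.rows
  cols := a.cols + b.cols
  entry := fun i j =>
    if i < a.rows ∧ j < a.cols then a.entry i j
    else if a.rows ≤ i ∧ a.cols ≤ j then b.entry (i - a.rows) (j - a.cols)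
    else 0
  entry_eq_zero := by
    intro i j h
    try dsimp only
    split_ifs with h1 h2
    · exact absurd h (by omega)
    · exact b.entry_eq_zero _ _ (by omega)
    · rfl

end NMat

/-- The monomial `∏_{s,t} x_{ι_s, κ_t}^{a_{s,t}}` attached to a matrix `a`
and chains `ι`, `κ`. -/
noncomputable def monomialOf (a : NMat) (ι : Fin a.rows → ℕ) (κ : Fin a.cols → ℕ) : Mon :=
  ∑ s : Fin a.rows, ∑ t : Fin a.cols, Finsupp.single (ι s, κ t) (a.entry s t)

/-- The monomial quasisymmetric function `M_a` (as a coefficient function):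
each monomial `∏ x_{ι_s,κ_t}^{a_{s,t}}` for strictly increasing chains occurs
with coefficient `1`.  In particular `M_e = 1`. -/
noncomputable def monQ {R : Type*} [CommRing R] (a : NMat) : Mon → R := fun m =>
  if ∃ (ι : Fin a.rows → ℕ) (κ : Fin a.cols → ℕ),
      StrictMono ι ∧ StrictMono κ ∧ m = monomialOf a ι κ
  then 1 else 0

/-- Two-parameter quasisymmetric function: finite degree, and for every
matrix composition `a` and all strictly increasing chains `ι`, `κ`, the
coefficients of `∏ x_{ι_s,κ_t}^{a_{s,t}}` and of `∏ x_{s,t}^{a_{s,t}}`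
coincide. -/
def IsQSym {R : Type*} [CommRing R] (f : Mon → R) : Prop :=
  FinDeg f ∧ ∀ a : NMat, a.IsComp →
    ∀ (ι : Fin a.rows → ℕ) (κ : Fin a.cols → ℕ), StrictMono ι → StrictMono κ →
      f (monomialOf a ι κ) =
        f (monomialOf a (fun s => (s : ℕ)) (fun t => (t : ℕ)))

/-- Product of formal power series (Cauchy product of coefficient
functions). -/
noncomputable def mulF {R : Type*} [CommRing R] (f g : Mon → R) : Mon → R :=
  fun m => ∑ p ∈ Finset.HasAntidiagonal.antidiagonal m, f p.1 * g p.2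

/-- Two-parameter quasisymmetric functions form an `R`-submodule of the
module of coefficient functions. -/
noncomputable def QSymSub (R : Type*) [CommRing R] : Submodule R (Mon → R) where
  carrier := {f | IsQSym f}
  add_mem' := by
    rintro f g ⟨⟨Df, hDf⟩, hf⟩ ⟨⟨Dg, hDg⟩, hg⟩
    refine ⟨⟨max Df Dg, ?_⟩, ?_⟩
    · intro m hm
      by_contra hc
      push_neg at hc
      have h1 : f m = 0 := by
        by_contra h
        have := hDf m h
        omega
      have h2 : g m = 0 := by
        by_contra h
        have := hDg m h
        omega
      apply hm
      show f m + g m = 0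
      rw [h1, h2, add_zero]
    · intro a ha ι κ hι hκ
      show f _ + g _ = f _ + g _
      rw [hf a ha ι κ hι hκ, hg a ha ι κ hι hκ]
  zero_mem' := ⟨⟨0, fun _ hm => absurd rfl hm⟩, fun _ _ _ _ _ _ => rfl⟩
  smul_mem' := by
    rintro c f ⟨⟨Df, hDf⟩, hf⟩
    refine ⟨⟨Df, ?_⟩, ?_⟩
    · intro m hm
      apply hDf
      intro h
      apply hm
      show c • f m = 0
      rw [h, smul_zero]
    · intro a ha ι κ hι hκ
      show c • f _ = c • f _
      rw [hf a ha ι κ hι hκ]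

/-- Index shift used by the free analogue of zero insertion: indices with
coordinate `≥ k` along axis `a` are shifted up by one (axis `0` = rows). -/
def liftIdx (a : Fin 2) (k : ℕ) (i : ℕ × ℕ) : ℕ × ℕ :=
  if a = 0 then (if i.1 < k then i else (i.1 + 1, i.2))
  else (if i.2 < k then i else (i.1, i.2 + 1))

/-- The free analogue of zero insertion on formal power series: the algebra
endomorphism sending `x_i ↦ x_i` for `i_a < k`, `x_i ↦ 0` for `i_a = k` and
`x_i ↦ x_{i - e_a}` for `i_a > k` (0-based position `k`).  On coefficient
functions it is given by precomposition with the index lift. -/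
noncomputable def zeroF {R : Type*} [CommRing R] (a : Fin 2) (k : ℕ)
    (f : Mon → R) : Mon → R :=
  fun m => f (m.mapDomain (liftIdx a k))

/-- The quasi-shuffle summand `c^{p,q}` for `ℕ₀`-matrices. -/
noncomputable def nQshMat (a b : NMat) {j k : ℕ}
    (p : Fin (a.rows + b.rows) → Fin j) (q : Fin (a.cols + b.cols) → Fin k) :
    NMat where
  rows := j
  cols := k
  entry := fun x y =>
    if hx : x < j then
      if hy : y < k then
        ∑ u ∈ Finset.univ.filter (fun u => p u = ⟨x, hx⟩),
          ∑ v ∈ Finset.univ.filter (fun v => q v = ⟨y, hy⟩),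
            (a.diag b).entry u v
      else 0
    else 0
  entry_eq_zero := by
    intro x y h
    try dsimp only
    split_ifs with hx hy
    · exact absurd h (by omega)
    · rfl
    · rfl

/-- One-dimensional two-parameter sums signature coefficient `⟨SS(Z), a⟩`. -/
noncomputable def SScN {K : Type*} [CommRing K] (Z : ℕ × ℕ → K) (a : NMat) : K :=
  ∑ᶠ ι ∈ {f : Fin a.rows → ℕ | StrictMono f},
    ∑ᶠ κ ∈ {g : Fin a.cols → ℕ | StrictMono g},
      ∏ s : Fin a.rows, ∏ t : Fin a.cols, Z (ι s, κ t) ^ a.entry s t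

/-- Evaluation of a formal power series at finitely supported data. -/
noncomputable def evalSeries {K : Type*} [CommRing K] (f : Mon → K)
    (Z : ℕ × ℕ → K) : K :=
  ∑ᶠ m : Mon, f m * m.prod fun i e => Z i ^ e

/-! A summand of `⟨SS_{ℓ;r}(A ⊘ B), a⟩` is indexed by a row chain `ι` and a column chain `κ`.
Cutting `ι` at `rows A` and `κ` at `cols A` splits them into chains inside the `A`-window and
chains inside the `B`-window, with `s₀` resp. `t₀` entries below the cut. As `A ⊘ B` vanishes on
the two off-diagonal blocks, the summand vanishes unless `a` vanishes off the blocks at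
`(s₀, t₀)`, i.e. `a = diag(b, c)` with `b` of size `s₀ × t₀`; it is then the product of a summand
of `⟨SS_{ℓ;size A}, b⟩` and one of `⟨SS_{size A;r}, c⟩`. The unbounded identity is the bounded
one on a window containing both supports. -/

attribute [ext] RawMat

def VanishesOffBlocks {M : Type*} [Zero M] (f : ℕ × ℕ → M) (k : ℕ × ℕ) : Prop :=
  ∀ i : ℕ × ℕ, (i.1 < k.1 ∧ k.2 ≤ i.2) ∨ (k.1 ≤ i.1 ∧ i.2 < k.2) → f i = 0

section Data

lemma lt_sInf_of_evZ [Zero V] {Z : ℕ × ℕ → V} (hZ : EvZ Z) (f : ℕ × ℕ → ℕ) {i : ℕ × ℕ}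
    (hi : Z i ≠ 0) : f i < sInf {m : ℕ | ∀ i : ℕ × ℕ, Z i ≠ 0 → f i < m} := by
  obtain ⟨N, hN⟩ := (hZ.image f).bddAbove
  exact Nat.sInf_mem (s := {m : ℕ | ∀ i : ℕ × ℕ, Z i ≠ 0 → f i < m})
    ⟨N + 1, fun j hj => Nat.lt_succ_of_le (hN ⟨j, hj, rfl⟩)⟩ i hi

lemma lt_rowsZ [Zero V] {Z : ℕ × ℕ → V} (hZ : EvZ Z) {i : ℕ × ℕ} (hi : Z i ≠ 0) :
    i.1 < rowsZ Z :=
  lt_sInf_of_evZ hZ Prod.fst hi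

lemma lt_colsZ [Zero V] {Z : ℕ × ℕ → V} (hZ : EvZ Z) {i : ℕ × ℕ} (hi : Z i ≠ 0) :
    i.2 < colsZ Z :=
  lt_sInf_of_evZ hZ Prod.snd hi

lemma zeroIns_zero_iterate_apply [Zero V] (m : ℕ) (X : ℕ × ℕ → V) (i : ℕ × ℕ) :
    (zeroIns 0 0)^[m] X i = if i.1 < m then 0 else X (i.1 - m, i.2) := by
  induction m generalizing i with
  | zero => simp
  | succ m ih =>
    rw [Function.iterate_succ_apply']
    simp only [zeroIns, axC, shiftD, if_true, ih]
    split_ifs <;> first | rfl | omega | (congr 2; omega)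

lemma zeroIns_one_iterate_apply [Zero V] (m : ℕ) (X : ℕ × ℕ → V) (i : ℕ × ℕ) :
    (zeroIns 1 0)^[m] X i = if i.2 < m then 0 else X (i.1, i.2 - m) := by
  induction m generalizing i with
  | zero => simp
  | succ m ih =>
    rw [Function.iterate_succ_apply']
    simp only [zeroIns, axC, shiftD, one_ne_zero, if_false, ih]
    split_ifs <;> first | rfl | omega | (congr 2; omega)

variable [AddCommGroup V] {A : ℕ × ℕ → V} (B : ℕ × ℕ → V)

lemma dconcZ_apply (hA : EvZ A) (i : ℕ × ℕ) :
    dconcZ A B i = if i.1 < rowsZ A ∧ i.2 < colsZ A then A i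
      else if rowsZ A ≤ i.1 ∧ colsZ A ≤ i.2 then B (i.1 - rowsZ A, i.2 - colsZ A)
      else 0 := by
  have hA0 : rowsZ A ≤ i.1 ∨ colsZ A ≤ i.2 → A i = 0 := fun h => by
    by_contra hi
    have := lt_rowsZ hA hi
    have := lt_colsZ hA hi
    omega
  simp only [dconcZ, Pi.add_apply, zeroIns_zero_iterate_apply, zeroIns_one_iterate_apply]
  split_ifs <;> simp_all <;> omega

lemma vanishesOffBlocks_dconcZ (hA : EvZ A) :
    VanishesOffBlocks (dconcZ A B) (rowsZ A, colsZ A) := fun i hi => by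
  rw [dconcZ_apply B hA, if_neg (by omega), if_neg (by omega)]

lemma dconcZ_apply_of_lt (hA : EvZ A) {i : ℕ × ℕ} (h₁ : i.1 < rowsZ A) (h₂ : i.2 < colsZ A) :
    dconcZ A B i = A i := by
  rw [dconcZ_apply B hA, if_pos ⟨h₁, h₂⟩]

lemma dconcZ_apply_add (hA : EvZ A) (i : ℕ × ℕ) :
    dconcZ A B ((rowsZ A, colsZ A) + i) = B i := by
  rw [dconcZ_apply B hA, if_neg (by simp), if_pos (by simp)]
  simp

lemma dconcZ_lt_of_ne_zero (hA : EvZ A) (hB : EvZ B) {i : ℕ × ℕ} (hi : dconcZ A B i ≠ 0) :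
    i.1 < rowsZ A + rowsZ B ∧ i.2 < colsZ A + colsZ B := by
  rw [dconcZ_apply B hA] at hi
  split_ifs at hi with h₁ h₂
  · omega
  · have := lt_rowsZ hB hi
    have := lt_colsZ hB hi
    omega
  · exact absurd rfl hi

end Data

section Chains

lemma mem_chainsB {m lo hi : ℕ} {ι : Fin m → ℕ} :
    ι ∈ chainsB m lo hi ↔ (∀ s, lo ≤ ι s ∧ ι s < hi) ∧ StrictMono ι := by
  simp [chainsB, Fintype.mem_piFinset, forall_and]

noncomputable def numBelow {m : ℕ} (mid : ℕ) (ι : Fin m → ℕ) : ℕ :=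
  (Finset.univ.filter fun s => ι s < mid).card

lemma numBelow_le {m : ℕ} (mid : ℕ) (ι : Fin m → ℕ) : numBelow mid ι ≤ m :=
  (Finset.card_filter_le _ _).trans (Finset.card_fin m).le

lemma lt_iff_lt_numBelow {m mid : ℕ} {ι : Fin m → ℕ} (hι : StrictMono ι) (s : Fin m) :
    ι s < mid ↔ (s : ℕ) < numBelow mid ι := by
  constructor
  · intro h
    have : Finset.Iic s ⊆ Finset.univ.filter fun s => ι s < mid := fun t ht =>
      Finset.mem_filter.2 ⟨Finset.mem_univ t, (hι.monotone (Finset.mem_Iic.1 ht)).trans_lt h⟩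
    simpa [numBelow] using Finset.card_le_card this
  · intro h
    by_contra hc
    have : (Finset.univ.filter fun s => ι s < mid) ⊆ Finset.Iio s := fun t ht =>
      Finset.mem_Iio.2 <| lt_of_not_ge fun hst =>
        hc ((hι.monotone hst).trans_lt (Finset.mem_filter.1 ht).2)
    have := Finset.card_le_card this
    rw [Fin.card_Iio] at this
    exact absurd this (not_le.2 h)

def chainAppend {m : ℕ} (s₀ : ℕ) (ι₁ : Fin s₀ → ℕ) (ι₂ : Fin (m - s₀) → ℕ) : Fin m → ℕ :=
  fun s => if h : (s : ℕ) < s₀ then ι₁ ⟨s, h⟩ else ι₂ ⟨s - s₀, by omega⟩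

lemma chainAppend_of_lt {m s₀ : ℕ} (ι₁ : Fin s₀ → ℕ) (ι₂ : Fin (m - s₀) → ℕ) {s : Fin m}
    (h : (s : ℕ) < s₀) : chainAppend s₀ ι₁ ι₂ s = ι₁ ⟨s, h⟩ :=
  dif_pos h

lemma chainAppend_of_le {m s₀ : ℕ} (ι₁ : Fin s₀ → ℕ) (ι₂ : Fin (m - s₀) → ℕ) {s : Fin m}
    (h : s₀ ≤ s) : chainAppend s₀ ι₁ ι₂ s = ι₂ ⟨s - s₀, by omega⟩ :=
  dif_neg (not_lt.2 h)

lemma chainAppend_castLE {m s₀ : ℕ} (hs : s₀ ≤ m) (ι₁ : Fin s₀ → ℕ) (ι₂ : Fin (m - s₀) → ℕ)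
    (s : Fin s₀) : chainAppend s₀ ι₁ ι₂ (Fin.castLE hs s) = ι₁ s :=
  chainAppend_of_lt ι₁ ι₂ s.2

lemma chainAppend_addNat {m s₀ : ℕ} (ι₁ : Fin s₀ → ℕ) (ι₂ : Fin (m - s₀) → ℕ)
    (s : Fin (m - s₀)) : chainAppend s₀ ι₁ ι₂ ⟨s + s₀, by omega⟩ = ι₂ s := by
  rw [chainAppend_of_le ι₁ ι₂ (Nat.le_add_left _ _)]
  simp

def chainTake {m : ℕ} (s₀ : ℕ) (hs : s₀ ≤ m) (ι : Fin m → ℕ) : Fin s₀ → ℕ :=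
  fun s => ι (Fin.castLE hs s)

def chainDrop {m : ℕ} (s₀ : ℕ) (ι : Fin m → ℕ) : Fin (m - s₀) → ℕ :=
  fun s => ι ⟨s + s₀, by omega⟩

lemma chainAppend_take_drop {m s₀ : ℕ} (hs : s₀ ≤ m) (ι : Fin m → ℕ) :
    chainAppend s₀ (chainTake s₀ hs ι) (chainDrop s₀ ι) = ι := by
  funext s
  rcases lt_or_ge (s : ℕ) s₀ with h | h
  · rw [chainAppend_of_lt _ _ h]
    rfl
  · rw [chainAppend_of_le _ _ h]
    simp only [chainDrop]
    congr
    omega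

section Split
variable {m s₀ lo mid hi : ℕ} {ι₁ : Fin s₀ → ℕ} {ι₂ : Fin (m - s₀) → ℕ}

lemma chainAppend_lt_iff (hι₁ : ι₁ ∈ chainsB s₀ lo mid) (hι₂ : ι₂ ∈ chainsB (m - s₀) mid hi)
    (s : Fin m) : chainAppend s₀ ι₁ ι₂ s < mid ↔ (s : ℕ) < s₀ := by
  rcases lt_or_ge (s : ℕ) s₀ with h | h
  · simpa [chainAppend_of_lt _ _ h, h] using ((mem_chainsB.1 hι₁).1 _).2
  · simpa [chainAppend_of_le _ _ h, not_lt.2 h] using ((mem_chainsB.1 hι₂).1 ⟨s - s₀, by omega⟩).1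

lemma chainAppend_mem_chainsB (hmid : lo ≤ mid ∧ mid ≤ hi)
    (hι₁ : ι₁ ∈ chainsB s₀ lo mid) (hι₂ : ι₂ ∈ chainsB (m - s₀) mid hi) :
    chainAppend s₀ ι₁ ι₂ ∈ chainsB m lo hi := by
  obtain ⟨hb₁, hm₁⟩ := mem_chainsB.1 hι₁
  obtain ⟨hb₂, hm₂⟩ := mem_chainsB.1 hι₂
  refine mem_chainsB.2 ⟨fun s => ?_, fun u v (huv : (u : ℕ) < v) => ?_⟩
  · rcases lt_or_ge (s : ℕ) s₀ with h | h
    · rw [chainAppend_of_lt _ _ h]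
      exact ⟨(hb₁ _).1, (hb₁ _).2.trans_le hmid.2⟩
    · rw [chainAppend_of_le _ _ h]
      exact ⟨hmid.1.trans (hb₂ _).1, (hb₂ _).2⟩
  · rcases lt_or_ge (v : ℕ) s₀ with hv | hv
    · rw [chainAppend_of_lt _ _ (huv.trans hv), chainAppend_of_lt _ _ hv]
      exact hm₁ (Fin.mk_lt_mk.2 huv)
    rcases lt_or_ge (u : ℕ) s₀ with hu | hu
    · rw [chainAppend_of_lt _ _ hu, chainAppend_of_le _ _ hv]
      exact (hb₁ _).2.trans_le (hb₂ _).1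
    · rw [chainAppend_of_le _ _ hu, chainAppend_of_le _ _ hv]
      exact hm₂ (Fin.mk_lt_mk.2 (by omega))

lemma numBelow_chainAppend (hs : s₀ ≤ m)
    (hι₁ : ι₁ ∈ chainsB s₀ lo mid) (hι₂ : ι₂ ∈ chainsB (m - s₀) mid hi) :
    numBelow mid (chainAppend s₀ ι₁ ι₂) = s₀ := by
  rw [numBelow, Finset.filter_congr fun s _ => chainAppend_lt_iff hι₁ hι₂ s,
    Fin.card_filter_val_lt, min_eq_right hs]

end Split

lemma sum_chainsB_split {M : Type*} [AddCommMonoid M] {m lo mid hi : ℕ}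
    (hmid : lo ≤ mid ∧ mid ≤ hi) (f : (Fin m → ℕ) → M) :
    ∑ ι ∈ chainsB m lo hi, f ι = ∑ s₀ ∈ Finset.range (m + 1),
      ∑ p ∈ chainsB s₀ lo mid ×ˢ chainsB (m - s₀) mid hi, f (chainAppend s₀ p.1 p.2) := by
  rw [← Finset.sum_fiberwise_of_maps_to (g := numBelow mid) (t := Finset.range (m + 1))
    fun ι _ => Finset.mem_range.2 (Nat.lt_succ_of_le (numBelow_le mid ι))]
  refine Finset.sum_congr rfl fun s₀ hs₀ => ?_
  have hs : s₀ ≤ m := Nat.lt_succ_iff.1 (Finset.mem_range.1 hs₀)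
  symm
  refine Finset.sum_nbij' (fun p => chainAppend s₀ p.1 p.2)
    (fun ι => (chainTake s₀ hs ι, chainDrop s₀ ι)) ?_ ?_ ?_ ?_ fun _ _ => rfl
  · rintro ⟨ι₁, ι₂⟩ hp
    obtain ⟨hι₁, hι₂⟩ := Finset.mem_product.1 hp
    exact Finset.mem_filter.2
      ⟨chainAppend_mem_chainsB hmid hι₁ hι₂, numBelow_chainAppend hs hι₁ hι₂⟩
  · intro ι hι
    obtain ⟨hι, hcount⟩ := Finset.mem_filter.1 hι
    obtain ⟨hb, hmono⟩ := mem_chainsB.1 hι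
    have hlt (s : Fin m) : ι s < mid ↔ (s : ℕ) < s₀ := hcount ▸ lt_iff_lt_numBelow hmono s
    refine Finset.mem_product.2 ⟨mem_chainsB.2 ⟨fun s => ⟨(hb _).1, (hlt _).2 s.2⟩,
      fun u v h => hmono h⟩, mem_chainsB.2 ⟨fun s => ⟨?_, (hb _).2⟩,
      fun u v h => hmono (Fin.mk_lt_mk.2 (Nat.add_lt_add_right h s₀))⟩⟩
    exact not_lt.1 fun h => by simpa using (hlt _).1 h
  · rintro ⟨ι₁, ι₂⟩ -
    exact Prod.ext (funext (chainAppend_castLE hs ι₁ ι₂)) (funext (chainAppend_addNat ι₁ ι₂))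
  · exact fun ι _ => chainAppend_take_drop hs ι

lemma sum_chainsB_add {M : Type*} [AddCommMonoid M] {m : ℕ} (c lo hi : ℕ)
    (f : (Fin m → ℕ) → M) :
    ∑ ι ∈ chainsB m (c + lo) (c + hi), f ι = ∑ ι ∈ chainsB m lo hi, f (fun s => c + ι s) := by
  symm
  refine Finset.sum_nbij' (fun ι s => c + ι s) (fun ι s => ι s - c) ?_ ?_ ?_ ?_ fun _ _ => rfl
  · intro ι hι
    obtain ⟨hb, hmono⟩ := mem_chainsB.1 hι
    exact mem_chainsB.2 ⟨fun s => ⟨by have := hb s; omega, by have := hb s; omega⟩,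
      fun u v h => Nat.add_lt_add_left (hmono h) c⟩
  · intro ι hι
    obtain ⟨hb, hmono⟩ := mem_chainsB.1 hι
    exact mem_chainsB.2 ⟨fun s => ⟨by have := hb s; omega, by have := hb s; omega⟩,
      fun u v h => by have := hb u; have := hmono h; dsimp only; omega⟩
  · exact fun ι _ => funext fun s => Nat.add_sub_cancel_left _ _
  · intro ι hι
    obtain ⟨hb, -⟩ := mem_chainsB.1 hι
    exact funext fun s => by have := hb s; dsimp only; omega

end Chains

namespace RawMat

variable {d : ℕ}

def topLeft (a : RawMat d) (k : ℕ × ℕ) : RawMat d where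
  rows := k.1
  cols := k.2
  entry i j := if i < k.1 ∧ j < k.2 then a.entry i j else 0
  entry_eq_zero i j h := if_neg (by omega)

def bottomRight (a : RawMat d) (k : ℕ × ℕ) : RawMat d where
  rows := a.rows - k.1
  cols := a.cols - k.2
  entry i j := a.entry (i + k.1) (j + k.2)
  entry_eq_zero i j h := a.entry_eq_zero _ _ (by omega)

def IsBlockDiagAt (a : RawMat d) (k : ℕ × ℕ) : Prop :=
  VanishesOffBlocks (fun i => a.entry i.1 i.2) k

lemma IsBlockDiagAt.entry_eq_zero {a : RawMat d} {k : ℕ × ℕ} (hab : a.IsBlockDiagAt k) {i j : ℕ}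
    (h : (i < k.1 ∧ k.2 ≤ j) ∨ (k.1 ≤ i ∧ j < k.2)) : a.entry i j = 0 :=
  hab (i, j) h

noncomputable def blockSplits (a : RawMat d) : Finset (ℕ × ℕ) :=
  (Finset.range (a.rows + 1) ×ˢ Finset.range (a.cols + 1)).filter a.IsBlockDiagAt

lemma diag_entry (b c : RawMat d) (i j : ℕ) :
    (b.diag c).entry i j = if i < b.rows ∧ j < b.cols then b.entry i j
      else if b.rows ≤ i ∧ b.cols ≤ j then c.entry (i - b.rows) (j - b.cols) else 0 :=
  rfl

variable {a : RawMat d} {k : ℕ × ℕ}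

@[simp] lemma topLeft_rows : (a.topLeft k).rows = k.1 := rfl
@[simp] lemma topLeft_cols : (a.topLeft k).cols = k.2 := rfl
@[simp] lemma bottomRight_rows : (a.bottomRight k).rows = a.rows - k.1 := rfl
@[simp] lemma bottomRight_cols : (a.bottomRight k).cols = a.cols - k.2 := rfl

lemma topLeft_entry (i j : ℕ) :
    (a.topLeft k).entry i j = if i < k.1 ∧ j < k.2 then a.entry i j else 0 :=
  rfl

lemma bottomRight_entry (i j : ℕ) : (a.bottomRight k).entry i j = a.entry (i + k.1) (j + k.2) :=
  rfl

lemma mem_blockSplits : k ∈ a.blockSplits ↔ k.1 ≤ a.rows ∧ k.2 ≤ a.cols ∧ a.IsBlockDiagAt k := by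
  simp [blockSplits, and_assoc]

lemma diag_topLeft_bottomRight (hk : k ∈ a.blockSplits) :
    (a.topLeft k).diag (a.bottomRight k) = a := by
  obtain ⟨hr, hc, hab⟩ := mem_blockSplits.1 hk
  refine RawMat.ext (Nat.add_sub_cancel' hr) (Nat.add_sub_cancel' hc) (funext₂ fun i j => ?_)
  rw [diag_entry]
  by_cases h₁ : i < k.1 ∧ j < k.2
  · simp [topLeft_entry, h₁]
  by_cases h₂ : k.1 ≤ i ∧ k.2 ≤ j
  · simp [bottomRight_entry, h₁, h₂, Nat.sub_add_cancel]
  · simp only [topLeft_rows, topLeft_cols, h₁, h₂, if_false]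
    exact (hab.entry_eq_zero (by omega)).symm

lemma IsComp.topLeft (ha : a.IsComp) (hk : k ∈ a.blockSplits) : (a.topLeft k).IsComp := by
  obtain ⟨hr, hc, hab⟩ := mem_blockSplits.1 hk
  constructor
  · intro i (hi : i < k.1)
    obtain ⟨j, -, hj⟩ := ha.1 i (by omega)
    have hjk : j < k.2 := lt_of_not_ge fun h => hj (hab.entry_eq_zero (Or.inl ⟨hi, h⟩))
    exact ⟨j, hjk, by simpa [topLeft_entry, hi, hjk] using hj⟩
  · intro j (hj : j < k.2)
    obtain ⟨i, -, hi⟩ := ha.2 j (by omega)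
    have hik : i < k.1 := lt_of_not_ge fun h => hi (hab.entry_eq_zero (Or.inr ⟨h, hj⟩))
    exact ⟨i, hik, by simpa [topLeft_entry, hik, hj] using hi⟩

lemma IsComp.bottomRight (ha : a.IsComp) (hk : k ∈ a.blockSplits) :
    (a.bottomRight k).IsComp := by
  obtain ⟨hr, hc, hab⟩ := mem_blockSplits.1 hk
  constructor
  · intro i (hi : i < a.rows - k.1)
    obtain ⟨j, hj, hij⟩ := ha.1 (i + k.1) (by omega)
    have hjk : k.2 ≤ j := le_of_not_gt fun h => hij (hab.entry_eq_zero (Or.inr ⟨by simp, h⟩))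
    exact ⟨j - k.2, by simp only [bottomRight_cols]; omega, by
      simpa [bottomRight_entry, Nat.sub_add_cancel hjk] using hij⟩
  · intro j (hj : j < a.cols - k.2)
    obtain ⟨i, hi, hij⟩ := ha.2 (j + k.2) (by omega)
    have hik : k.1 ≤ i := le_of_not_gt fun h => hij (hab.entry_eq_zero (Or.inl ⟨h, by simp⟩))
    exact ⟨i - k.1, by simp only [bottomRight_rows]; omega, by
      simpa [bottomRight_entry, Nat.sub_add_cancel hik] using hij⟩

lemma topLeft_diag (b c : RawMat d) : (b.diag c).topLeft (b.rows, b.cols) = b := by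
  refine RawMat.ext rfl rfl (funext₂ fun i j => ?_)
  simp only [topLeft_entry, diag_entry]
  split_ifs with h
  · rfl
  · exact (b.entry_eq_zero i j (by omega)).symm

lemma bottomRight_diag (b c : RawMat d) : (b.diag c).bottomRight (b.rows, b.cols) = c := by
  refine RawMat.ext (by simp [diag]) (by simp [diag]) (funext₂ fun i j => ?_)
  simp only [bottomRight_entry, diag_entry]
  split_ifs with h₁ h₂
  · omega
  · simp
  · omega

lemma diag_mem_blockSplits (b c : RawMat d) : (b.rows, b.cols) ∈ (b.diag c).blockSplits :=
  mem_blockSplits.2 ⟨by simp [diag], by simp [diag], fun i hi => by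
    simp only [diag_entry]
    rw [if_neg (by omega), if_neg (by omega)]⟩

lemma finsum_diag_eq (ha : a.IsComp) {M : Type*} [AddCommMonoid M]
    (g : RawMat d × RawMat d → M) :
    ∑ᶠ bc ∈ {bc : RawMat d × RawMat d | bc.1.IsComp ∧ bc.2.IsComp ∧ bc.1.diag bc.2 = a}, g bc =
      ∑ k ∈ a.blockSplits, g (a.topLeft k, a.bottomRight k) := by
  have hset : {bc : RawMat d × RawMat d | bc.1.IsComp ∧ bc.2.IsComp ∧ bc.1.diag bc.2 = a} =
      a.blockSplits.image fun k => (a.topLeft k, a.bottomRight k) := by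
    ext ⟨b, c⟩
    simp only [Set.mem_ofPred_eq, Finset.coe_image, Set.mem_image, Finset.mem_coe, Prod.mk.injEq]
    constructor
    · rintro ⟨-, -, rfl⟩
      exact ⟨_, diag_mem_blockSplits b c, topLeft_diag b c, bottomRight_diag b c⟩
    · rintro ⟨k, hk, rfl, rfl⟩
      exact ⟨ha.topLeft hk, ha.bottomRight hk, diag_topLeft_bottomRight hk⟩
  rw [hset, finsum_mem_coe_finset, Finset.sum_image]
  exact fun k _ k' _ h => congrArg (fun bc => (bc.1.rows, bc.1.cols)) h

end RawMat

section Signature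

variable {d : ℕ} {R : Type*} [CommRing R]

lemma evalMon_zero_right (z : Fin d → R) : evalMon z 0 = 1 := by
  simp [evalMon]

lemma evalMon_zero_left {m : Md d} (hm : m ≠ 0) : evalMon (0 : Fin d → R) m = 0 := by
  obtain ⟨j, hj⟩ := Finsupp.support_nonempty_iff.2 hm
  exact Finset.prod_eq_zero hj (by simp [zero_pow (Finsupp.mem_support_iff.1 hj)])

def chainMonomial (Z : ℕ × ℕ → Fin d → R) (a : RawMat d) (ι : Fin a.rows → ℕ)
    (κ : Fin a.cols → ℕ) : R :=
  ∏ s, ∏ t, evalMon (Z (ι s, κ t)) (a.entry s t)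

variable {Z : ℕ × ℕ → Fin d → R} {a : RawMat d}

lemma SSb_eq_sum_chainMonomial (l r : ℕ × ℕ) :
    SSb Z l r a =
      ∑ ι ∈ chainsB a.rows l.1 r.1, ∑ κ ∈ chainsB a.cols l.2 r.2, chainMonomial Z a ι κ :=
  rfl

lemma chainMonomial_eq_zero {ι : Fin a.rows → ℕ} {κ : Fin a.cols → ℕ} {s : Fin a.rows}
    {t : Fin a.cols} (ha : a.entry s t ≠ 0) (hZ : Z (ι s, κ t) = 0) :
    chainMonomial Z a ι κ = 0 :=
  Finset.prod_eq_zero (Finset.mem_univ s) <|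
    Finset.prod_eq_zero (Finset.mem_univ t) (hZ ▸ evalMon_zero_left ha)

lemma prod_fin_split {M : Type*} [CommMonoid M] {m s₀ : ℕ} (hs : s₀ ≤ m) (f : Fin m → M) :
    ∏ s, f s = (∏ s : Fin s₀, f (Fin.castLE hs s)) * ∏ s : Fin (m - s₀), f ⟨s + s₀, by omega⟩ := by
  have e : s₀ + (m - s₀) = m := Nat.add_sub_cancel' hs
  rw [← (finCongr e).prod_comp, Fin.prod_univ_add]
  congr 1
  exact Fintype.prod_congr _ _ fun s => congrArg f (Fin.ext (by simp [Nat.add_comm]))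

variable {k : ℕ × ℕ}

lemma chainMonomial_chainAppend (hk : k ∈ a.blockSplits) (ι₁ : Fin k.1 → ℕ)
    (ι₂ : Fin (a.rows - k.1) → ℕ) (κ₁ : Fin k.2 → ℕ) (κ₂ : Fin (a.cols - k.2) → ℕ) :
    chainMonomial Z a (chainAppend k.1 ι₁ ι₂) (chainAppend k.2 κ₁ κ₂) =
      chainMonomial Z (a.topLeft k) ι₁ κ₁ * chainMonomial Z (a.bottomRight k) ι₂ κ₂ := by
  obtain ⟨hr, hc, hab⟩ := RawMat.mem_blockSplits.1 hk
  rw [chainMonomial, prod_fin_split hr]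
  congr 1
  · refine Finset.prod_congr rfl fun s _ => ?_
    rw [prod_fin_split hc]
    refine (congrArg₂ (· * ·) (Finset.prod_congr rfl fun t _ => ?_)
      (Finset.prod_eq_one fun t _ => ?_)).trans (mul_one _)
    · simp [chainAppend_castLE, RawMat.topLeft_entry]
    · simp only [Fin.val_castLE]
      rw [hab.entry_eq_zero (Or.inl ⟨s.2, Nat.le_add_left _ _⟩), evalMon_zero_right]
  · refine Finset.prod_congr rfl fun s _ => ?_
    rw [prod_fin_split hc]
    refine (congrArg₂ (· * ·) (Finset.prod_eq_one fun t _ => ?_)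
      (Finset.prod_congr rfl fun t _ => ?_)).trans (one_mul _)
    · simp only [Fin.val_castLE]
      rw [hab.entry_eq_zero (Or.inr ⟨Nat.le_add_left _ _, t.2⟩), evalMon_zero_right]
    · simp [chainAppend_addNat, RawMat.bottomRight_entry]

lemma chainMonomial_chainAppend_eq_zero {l mid r : ℕ × ℕ} (hZ : VanishesOffBlocks Z mid)
    (hab : ¬ a.IsBlockDiagAt k) {ι₁ : Fin k.1 → ℕ} {ι₂ : Fin (a.rows - k.1) → ℕ}
    {κ₁ : Fin k.2 → ℕ} {κ₂ : Fin (a.cols - k.2) → ℕ}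
    (hι₁ : ι₁ ∈ chainsB k.1 l.1 mid.1) (hι₂ : ι₂ ∈ chainsB (a.rows - k.1) mid.1 r.1)
    (hκ₁ : κ₁ ∈ chainsB k.2 l.2 mid.2) (hκ₂ : κ₂ ∈ chainsB (a.cols - k.2) mid.2 r.2) :
    chainMonomial Z a (chainAppend k.1 ι₁ ι₂) (chainAppend k.2 κ₁ κ₂) = 0 := by
  obtain ⟨⟨i, j⟩, hij, hne⟩ : ∃ i : ℕ × ℕ,
      ((i.1 < k.1 ∧ k.2 ≤ i.2) ∨ (k.1 ≤ i.1 ∧ i.2 < k.2)) ∧ a.entry i.1 i.2 ≠ 0 := by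
    simpa [RawMat.IsBlockDiagAt, VanishesOffBlocks] using hab
  have hi : i < a.rows := lt_of_not_ge fun h => hne (a.entry_eq_zero _ _ (Or.inl h))
  have hj : j < a.cols := lt_of_not_ge fun h => hne (a.entry_eq_zero _ _ (Or.inr h))
  refine chainMonomial_eq_zero (s := ⟨i, hi⟩) (t := ⟨j, hj⟩) hne (hZ _ ?_)
  have hιi := chainAppend_lt_iff hι₁ hι₂ ⟨i, hi⟩
  have hκj := chainAppend_lt_iff hκ₁ hκ₂ ⟨j, hj⟩
  simp only at hιi hκj ⊢
  omega

theorem SSb_eq_sum_blockSplits {l mid r : ℕ × ℕ} (hZ : VanishesOffBlocks Z mid) (hl : l ≤ mid)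
    (hr : mid ≤ r) (a : RawMat d) :
    SSb Z l r a =
      ∑ k ∈ a.blockSplits, SSb Z l mid (a.topLeft k) * SSb Z mid r (a.bottomRight k) := by
  rw [Prod.le_def] at hl hr
  calc SSb Z l r a
      = ∑ s₀ ∈ Finset.range (a.rows + 1), ∑ t₀ ∈ Finset.range (a.cols + 1),
          ∑ p ∈ chainsB s₀ l.1 mid.1 ×ˢ chainsB (a.rows - s₀) mid.1 r.1,
            ∑ q ∈ chainsB t₀ l.2 mid.2 ×ˢ chainsB (a.cols - t₀) mid.2 r.2,
              chainMonomial Z a (chainAppend s₀ p.1 p.2) (chainAppend t₀ q.1 q.2) := by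
        rw [SSb_eq_sum_chainMonomial, sum_chainsB_split ⟨hl.1, hr.1⟩]
        refine Finset.sum_congr rfl fun s₀ _ => ?_
        simp_rw [sum_chainsB_split ⟨hl.2, hr.2⟩]
        exact Finset.sum_comm
    _ = ∑ k ∈ Finset.range (a.rows + 1) ×ˢ Finset.range (a.cols + 1),
          if a.IsBlockDiagAt k then SSb Z l mid (a.topLeft k) * SSb Z mid r (a.bottomRight k)
          else 0 := by
        rw [Finset.sum_product]
        refine Finset.sum_congr rfl fun s₀ hs₀ => Finset.sum_congr rfl fun t₀ ht₀ => ?_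
        split_ifs with hab
        · have hk : (s₀, t₀) ∈ a.blockSplits :=
            Finset.mem_filter.2 ⟨Finset.mem_product.2 ⟨hs₀, ht₀⟩, hab⟩
          simp only [SSb_eq_sum_chainMonomial, Finset.sum_mul_sum, Finset.sum_product]
          exact Finset.sum_congr rfl fun _ _ => Finset.sum_congr rfl fun _ _ =>
            Finset.sum_congr rfl fun _ _ => Finset.sum_congr rfl fun _ _ =>
              chainMonomial_chainAppend hk _ _ _ _
        · refine Finset.sum_eq_zero fun p hp => Finset.sum_eq_zero fun q hq => ?_
          obtain ⟨hp₁, hp₂⟩ := Finset.mem_product.1 hp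
          obtain ⟨hq₁, hq₂⟩ := Finset.mem_product.1 hq
          exact chainMonomial_chainAppend_eq_zero (k := (s₀, t₀)) hZ hab hp₁ hp₂ hq₁ hq₂
    _ = _ := (Finset.sum_filter _ _).symm

lemma SSb_congr {Z' : ℕ × ℕ → Fin d → R} {l r : ℕ × ℕ}
    (h : ∀ i : ℕ × ℕ, l.1 ≤ i.1 → i.1 < r.1 → l.2 ≤ i.2 → i.2 < r.2 → Z i = Z' i) :
    SSb Z l r a = SSb Z' l r a := by
  refine Finset.sum_congr rfl fun ι hι => Finset.sum_congr rfl fun κ hκ => ?_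
  obtain ⟨hι, -⟩ := mem_chainsB.1 hι
  obtain ⟨hκ, -⟩ := mem_chainsB.1 hκ
  refine Finset.prod_congr rfl fun s _ => Finset.prod_congr rfl fun t _ => ?_
  rw [h _ (hι s).1 (hι s).2 (hκ t).1 (hκ t).2]

lemma SSb_add_add (k l r : ℕ × ℕ) :
    SSb Z (k + l) (k + r) a = SSb (fun i => Z (k + i)) l r a := by
  simp only [SSb_eq_sum_chainMonomial, Prod.fst_add, Prod.snd_add, sum_chainsB_add]
  rfl

lemma SSc_eq_SSb (ha : a.IsComp) {r : ℕ × ℕ} (hZ : ∀ i, Z i ≠ 0 → i.1 < r.1 ∧ i.2 < r.2) :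
    SSc Z a = SSb Z 0 r a := by
  have hbound (ι : Fin a.rows → ℕ) (κ : Fin a.cols → ℕ) (h : chainMonomial Z a ι κ ≠ 0) :
      (∀ s, ι s < r.1) ∧ ∀ t, κ t < r.2 := by
    constructor
    · intro s
      obtain ⟨t, ht, hst⟩ := ha.1 s s.2
      by_contra hs
      exact h (chainMonomial_eq_zero (t := ⟨t, ht⟩) hst (not_not.1 fun hz => hs (hZ _ hz).1))
    · intro t
      obtain ⟨s, hs, hst⟩ := ha.2 t t.2
      by_contra ht
      exact h (chainMonomial_eq_zero (s := ⟨s, hs⟩) hst (not_not.1 fun hz => ht (hZ _ hz).2))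
  have hcols (ι : Fin a.rows → ℕ) :
      ∑ᶠ κ ∈ {g : Fin a.cols → ℕ | StrictMono g}, chainMonomial Z a ι κ =
        ∑ κ ∈ chainsB a.cols 0 r.2, chainMonomial Z a ι κ :=
    finsum_mem_eq_sum_of_subset _
      (fun κ ⟨hκ, hne⟩ => mem_chainsB.2 ⟨fun t => ⟨Nat.zero_le _, (hbound ι κ hne).2 t⟩, hκ⟩)
      fun κ hκ => (mem_chainsB.1 hκ).2
  calc SSc Z a
      = ∑ᶠ ι ∈ {f : Fin a.rows → ℕ | StrictMono f},
          ∑ κ ∈ chainsB a.cols 0 r.2, chainMonomial Z a ι κ :=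
        finsum_mem_congr rfl fun ι _ => hcols ι
    _ = SSb Z 0 r a := by
        refine finsum_mem_eq_sum_of_subset _ (fun ι ⟨hι, hne⟩ => ?_)
          fun ι hι => (mem_chainsB.1 hι).2
        obtain ⟨κ, -, hκ⟩ := Finset.exists_ne_zero_of_sum_ne_zero hne
        exact mem_chainsB.2 ⟨fun s => ⟨Nat.zero_le _, (hbound ι κ hκ).1 s⟩, hι⟩

end Signature

section DiagonalConcatenation

variable {d : ℕ} {R : Type*} [CommRing R] {A : ℕ × ℕ → Fin d → R} (B : ℕ × ℕ → Fin d → R)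

lemma SSb_dconcZ_eq_finsum (hA : EvZ A) {l r : ℕ × ℕ} (hl : l ≤ (rowsZ A, colsZ A))
    (hr : (rowsZ A, colsZ A) ≤ r) {a : RawMat d} (ha : a.IsComp) :
    SSb (dconcZ A B) l r a =
      ∑ᶠ bc ∈ {bc : RawMat d × RawMat d | bc.1.IsComp ∧ bc.2.IsComp ∧ bc.1.diag bc.2 = a},
        SSb (dconcZ A B) l (rowsZ A, colsZ A) bc.1 * SSb (dconcZ A B) (rowsZ A, colsZ A) r bc.2 := by
  rw [RawMat.finsum_diag_eq ha]
  exact SSb_eq_sum_blockSplits (vanishesOffBlocks_dconcZ B hA) hl hr a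

lemma SSb_dconcZ_topLeft (hA : EvZ A) (b : RawMat d) :
    SSb (dconcZ A B) 0 (rowsZ A, colsZ A) b = SSb A 0 (rowsZ A, colsZ A) b :=
  SSb_congr fun _ _ h₁ _ h₂ => dconcZ_apply_of_lt B hA h₁ h₂

lemma SSb_dconcZ_bottomRight (hA : EvZ A) (r : ℕ × ℕ) (c : RawMat d) :
    SSb (dconcZ A B) (rowsZ A, colsZ A) ((rowsZ A, colsZ A) + r) c = SSb B 0 r c := by
  have h := SSb_add_add (rowsZ A, colsZ A) 0 r (Z := dconcZ A B) (a := c)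
  rw [add_zero] at h
  simp only [h, dconcZ_apply_add B hA]

end DiagonalConcatenation

end TwoParam

open TwoParam in
theorem statement14_general {d : ℕ} {R : Type*} [CommRing R]
    (A B : ℕ × ℕ → Fin d → R) (hA : EvZ A) (hB : EvZ B) :
    (∀ l r : ℕ × ℕ,
      l.1 ≤ rowsZ A → l.2 ≤ colsZ A → rowsZ A ≤ r.1 → colsZ A ≤ r.2 →
      ∀ a : RawMat d, a.IsComp →
        SSb (dconcZ A B) l r a =
          ∑ᶠ bc ∈ {bc : RawMat d × RawMat d |
              bc.1.IsComp ∧ bc.2.IsComp ∧ bc.1.diag bc.2 = a},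
            SSb (dconcZ A B) l (rowsZ A, colsZ A) bc.1 *
              SSb (dconcZ A B) (rowsZ A, colsZ A) r bc.2) ∧
    (∀ a : RawMat d, a.IsComp →
      SSc (dconcZ A B) a =
        ∑ᶠ bc ∈ {bc : RawMat d × RawMat d |
            bc.1.IsComp ∧ bc.2.IsComp ∧ bc.1.diag bc.2 = a},
          SSc A bc.1 * SSc B bc.2) := by
  refine ⟨fun l r hl₁ hl₂ hr₁ hr₂ _ => SSb_dconcZ_eq_finsum B hA ⟨hl₁, hl₂⟩ ⟨hr₁, hr₂⟩,
    fun a ha => ?_⟩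
  rw [SSc_eq_SSb ha (r := (rowsZ A, colsZ A) + (rowsZ B, colsZ B))
      fun i hi => dconcZ_lt_of_ne_zero B hA hB hi,
    SSb_dconcZ_eq_finsum B hA zero_le le_self_add ha]
  refine finsum_mem_congr rfl fun bc hbc => ?_
  rw [SSc_eq_SSb hbc.1 (r := (rowsZ A, colsZ A)) fun i hi => ⟨lt_rowsZ hA hi, lt_colsZ hA hi⟩,
    SSc_eq_SSb hbc.2.1 (r := (rowsZ B, colsZ B)) fun i hi => ⟨lt_rowsZ hB hi, lt_colsZ hB hi⟩,
    SSb_dconcZ_topLeft B hA, SSb_dconcZ_bottomRight B hA]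

open TwoParam in
/-- Chen's identity with respect to diagonal
deconcatenation. -/
theorem statement14 {d : ℕ} {R : Type*} [CommRing R] [IsDomain R]
    (A B : ℕ × ℕ → Fin d → R) (hA : EvZ A) (hB : EvZ B) :
    (∀ l r : ℕ × ℕ,
      l.1 ≤ rowsZ A → l.2 ≤ colsZ A → rowsZ A ≤ r.1 → colsZ A ≤ r.2 →
      ∀ a : RawMat d, a.IsComp →
        SSb (dconcZ A B) l r a =
          ∑ᶠ bc ∈ {bc : RawMat d × RawMat d |
              bc.1.IsComp ∧ bc.2.IsComp ∧ bc.1.diag bc.2 = a},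
            SSb (dconcZ A B) l (rowsZ A, colsZ A) bc.1 *
              SSb (dconcZ A B) (rowsZ A, colsZ A) r bc.2) ∧
    (∀ a : RawMat d, a.IsComp →
      SSc (dconcZ A B) a =
        ∑ᶠ bc ∈ {bc : RawMat d × RawMat d |
            bc.1.IsComp ∧ bc.2.IsComp ∧ bc.1.diag bc.2 = a},
          SSc A bc.1 * SSc B bc.2) :=
  statement14_general A B hA hB
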